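/- For every fixed t ∈ (0,1), the quotient F(x,t)/H(x) tends to −t/2 as x → 0 from the right. -/

import Mathlib

/-- `h x = -x log x` (with `h 0 = 0`, since `Real.log 0 = 0`). -/
noncomputable def entH (x : ℝ) : ℝ := -x * Real.log x

/-- `H x = h x + h (1 - x)`. -/
noncomputable def entHH (x : ℝ) : ℝ := entH x + entH (1 - x)

/-- The rate function `F(x,t)`. -/
noncomputable def entF (x t : ℝ) : ℝ :=
  (1 / 2) * entH (t * x) + entH ((1 - t) * x) + (1 / 2) * entH (1 - (2 - t) * x) - entHH x

/-!
Since `h (a * x) = a * h x + x * h a`, the `x log x` terms of `F (x, t)` add up to `-(t / 2) * h x`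
and everything else is `O(x)`, because `h` is differentiable at `1` with `h 1 = 0`; likewise
`H x = h x + O(x)`. As `x = o(h x)` when `x → 0⁺`, both `F / h` and `H / h` converge, to `-t / 2`
and `1`.
-/

open Filter Asymptotics Real Topology

lemma entH_eq_negMulLog : entH = negMulLog := rfl

lemma isLittleO_id_negMulLog_nhdsGT : (fun x : ℝ => x) =o[𝓝[>] 0] negMulLog := by
  have hlog : (fun _ => (1 : ℝ)) =o[𝓝[>] 0] fun x => -log x :=
    ((isLittleO_const_id_atBot 1).comp_tendsto tendsto_log_nhdsGT_zero).neg_right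
  exact ((isBigO_refl _ _).mul_isLittleO hlog).congr (fun x => mul_one x)
    (fun x => by simp only [negMulLog]; ring)

lemma eventually_negMulLog_pos_nhdsGT : ∀ᶠ x in 𝓝[>] (0 : ℝ), 0 < negMulLog x := by
  filter_upwards [Ioo_mem_nhdsGT zero_lt_one] with x hx
  simpa [negMulLog] using mul_pos hx.1 (neg_pos.2 (log_neg hx.1 hx.2))

lemma isBigO_negMulLog_one_sub_mul (c : ℝ) :
    (fun x => negMulLog (1 - c * x)) =O[𝓝 0] fun x => x := by
  have hd : HasDerivAt (fun x => negMulLog (1 - c * x)) ((-log 1 - 1) * -c) 0 := by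
    refine HasDerivAt.comp (h₂ := negMulLog) 0 ?_ ?_
    · simpa using hasDerivAt_negMulLog one_ne_zero
    · simpa using ((hasDerivAt_id (0 : ℝ)).const_mul c).const_sub 1
  simpa using hd.isBigO_sub

lemma tendsto_div_negMulLog_of_isBigO {u : ℝ → ℝ} {a : ℝ}
    (h : (fun x => u x - a * negMulLog x) =O[𝓝 0] fun x => x) :
    Tendsto (fun x => u x / negMulLog x) (𝓝[>] 0) (𝓝 a) := by
  have hlim := ((h.mono nhdsWithin_le_nhds).trans_isLittleO
    isLittleO_id_negMulLog_nhdsGT).tendsto_div_nhds_zero.const_add a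
  rw [add_zero] at hlim
  refine hlim.congr' ?_
  filter_upwards [eventually_negMulLog_pos_nhdsGT] with x hx
  field_simp
  ring

lemma isBigO_entF_sub_mul_negMulLog (t : ℝ) :
    (fun x => entF x t - -t / 2 * negMulLog x) =O[𝓝 0] fun x => x := by
  have hF : ∀ x, entF x t - -t / 2 * negMulLog x = (negMulLog t / 2 + negMulLog (1 - t)) * x
      + 1 / 2 * negMulLog (1 - (2 - t) * x) - negMulLog (1 - 1 * x) := by
    intro x
    simp only [entF, entHH, entH_eq_negMulLog, negMulLog_mul, one_mul]
    ring
  simp only [hF]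
  exact (((isBigO_refl _ _).const_mul_left _).add
    ((isBigO_negMulLog_one_sub_mul _).const_mul_left _)).sub (isBigO_negMulLog_one_sub_mul 1)

lemma isBigO_entHH_sub_negMulLog :
    (fun x => entHH x - 1 * negMulLog x) =O[𝓝 0] fun x => x := by
  simpa [entHH, entH_eq_negMulLog] using isBigO_negMulLog_one_sub_mul 1

theorem stmt_19_general (t : ℝ) :
    Filter.Tendsto (fun x => entF x t / entHH x) (nhdsWithin 0 (Set.Ioi 0))
      (nhds (-t / 2)) := by
  have hF := tendsto_div_negMulLog_of_isBigO (isBigO_entF_sub_mul_negMulLog t)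
  have hH := tendsto_div_negMulLog_of_isBigO isBigO_entHH_sub_negMulLog
  refine (div_one (-t / 2) ▸ hF.div hH one_ne_zero).congr' ?_
  filter_upwards [eventually_negMulLog_pos_nhdsGT] with x hx
  exact div_div_div_cancel_right₀ hx.ne' _ _

theorem stmt_19 (t : ℝ) (ht : t ∈ Set.Ioo (0 : ℝ) 1) :
    Filter.Tendsto (fun x => entF x t / entHH x) (nhdsWithin 0 (Set.Ioi 0))
      (nhds (-t / 2)) :=
  stmt_19_general t
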